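/- Let φ be an F-filter on X and let A be a subset of X. If A ∩ B ≠ ∅ for every B ∈ φ, then there exists an F-ultrafilter p on X containing the family φ ∪ {X(f,r) : f ∈ Z(A), r > 0}. -/

import Mathlib

open Set

variable {X : Type*} [Nonempty X] [TopologicalSpace X] [DiscreteTopology X]

/-- The set `X(f,r) = {x ∈ X : |f(x)| ≤ r}`. -/
def XSet (f : BoundedContinuousFunction X ℂ) (r : ℝ) : Set X := {x | ‖f x‖ ≤ r}

/-- An `F`-family on `X`: a nonempty collection of nonempty subsets of `X` such that for every
member `A ≠ X` there are `B` in the collection and `f ∈ F` with `f(B) = {0}`,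
`f(X \ A) = {1}`. -/
def FFamily (F : StarSubalgebra ℂ (BoundedContinuousFunction X ℂ)) (𝒜 : Set (Set X)) : Prop :=
  𝒜.Nonempty ∧ (∀ A ∈ 𝒜, A.Nonempty) ∧
    ∀ A ∈ 𝒜, A ≠ Set.univ →
      ∃ B ∈ 𝒜, ∃ f ∈ F, (∀ x ∈ B, f x = 0) ∧ ∀ x ∉ A, f x = 1

/-- A filter on the set `X`, viewed as a collection of subsets. -/
def IsSetFilter (φ : Set (Set X)) : Prop :=
  φ.Nonempty ∧ (∀ A ∈ φ, ∀ B ∈ φ, A ∩ B ∈ φ) ∧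
    (∀ A ∈ φ, ∀ B : Set X, A ⊆ B → B ∈ φ) ∧ ∅ ∉ φ

/-- An `F`-filter on `X` is a filter which is also an `F`-family. -/
def FFilter (F : StarSubalgebra ℂ (BoundedContinuousFunction X ℂ)) (φ : Set (Set X)) : Prop :=
  IsSetFilter φ ∧ FFamily F φ

/-- An `F`-ultrafilter on `X` is an `F`-filter maximal with respect to inclusion. -/
def FUltrafilter (F : StarSubalgebra ℂ (BoundedContinuousFunction X ℂ)) (φ : Set (Set X)) : Prop :=
  FFilter F φ ∧ ∀ ψ : Set (Set X), FFilter F ψ → φ ⊆ ψ → ψ = φ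

/-- `F₀ = {f ∈ F : X(f,r) ≠ ∅ for all r > 0}`. -/
def FZero (F : StarSubalgebra ℂ (BoundedContinuousFunction X ℂ)) :
    Set (BoundedContinuousFunction X ℂ) :=
  {f | f ∈ F ∧ ∀ r : ℝ, 0 < r → (XSet f r).Nonempty}

/-- `Z(A) = {f ∈ F : f(x) = 0 for all x ∈ A}`. -/
def ZSet (F : StarSubalgebra ℂ (BoundedContinuousFunction X ℂ)) (A : Set X) :
    Set (BoundedContinuousFunction X ℂ) :=
  {f | f ∈ F ∧ ∀ x ∈ A, f x = 0}

/-- The finite intersection property. -/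
def FIP (𝒜 : Set (Set X)) : Prop :=
  ∀ s : Finset (Set X), ↑s ⊆ 𝒜 → s.Nonempty → (⋂₀ (s : Set (Set X))).Nonempty

/-- A filter base on `X`. -/
def IsFilterBase (ℬ : Set (Set X)) : Prop :=
  ℬ.Nonempty ∧ ∅ ∉ ℬ ∧ ∀ A ∈ ℬ, ∀ B ∈ ℬ, ∃ C ∈ ℬ, C ⊆ A ∩ B

/-- The filter generated by a filter base. -/
def genFilter (ℬ : Set (Set X)) : Set (Set X) :=
  {A | ∃ B ∈ ℬ, B ⊆ A}

/-- `δX`, the space of all `F`-ultrafilters on `X`. -/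
def Delta (F : StarSubalgebra ℂ (BoundedContinuousFunction X ℂ)) : Type _ :=
  {p : Set (Set X) // FUltrafilter F p}

/-- `Â = {p ∈ δX : A ∈ p}`. -/
def hatSet (F : StarSubalgebra ℂ (BoundedContinuousFunction X ℂ)) (A : Set X) :
    Set (Delta F) :=
  {p | A ∈ p.1}

/-- The topology on `δX` having `{Â : A ⊆ X}` as a base. -/
instance (F : StarSubalgebra ℂ (BoundedContinuousFunction X ℂ)) :
    TopologicalSpace (Delta F) :=
  TopologicalSpace.generateFrom {S | ∃ A : Set X, S = hatSet F A}

/-- For an `F`-filter `φ`, `φ̂ = {p ∈ δX : φ ⊆ p}`. -/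
def hatF (F : StarSubalgebra ℂ (BoundedContinuousFunction X ℂ)) (φ : Set (Set X)) :
    Set (Delta F) :=
  {p | φ ⊆ p.1}

/-- `τ(F)`, the weakest topology on `X` making every member of `F` continuous. -/
noncomputable def tauF (F : StarSubalgebra ℂ (BoundedContinuousFunction X ℂ)) : TopologicalSpace X :=
  ⨅ f ∈ (F : Set (BoundedContinuousFunction X ℂ)),
    TopologicalSpace.induced (fun x => f x) inferInstance

/-- `B(I) = {X(f,r) : f ∈ I, r > 0}` for an ideal `I` of `F`. -/
def BIdeal (F : StarSubalgebra ℂ (BoundedContinuousFunction X ℂ)) (I : Ideal F) :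
    Set (Set X) :=
  {S | ∃ f ∈ I, ∃ r : ℝ, 0 < r ∧ S = XSet (f : BoundedContinuousFunction X ℂ) r}

/-!
The sets `B ∩ X(g,r)` with `B ∈ φ`, `g ∈ Z(A)`, `r > 0` form a filter base: each contains a point
of `A ∩ B`, and `X(g₁ g₁* + g₂ g₂*, r²) ⊆ X(g₁,r) ∩ X(g₂,r)`. The filter they generate is an
`F`-family because the closed *-subalgebra `F` contains the cutoffs `θ ∘ |g|` for continuous `θ`
(Weierstrass approximation of `θ ∘ √` applied to `|g|² = g g*`). Zorn's lemma then extends it to an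
`F`-ultrafilter, since the union of a chain of `F`-filters is an `F`-filter.
-/

open scoped BoundedContinuousFunction

theorem StarSubalgebra.aeval_mem {R A : Type*} [CommSemiring R] [StarRing R] [Semiring A]
    [StarRing A] [Algebra R A] [StarModule R A] (S : StarSubalgebra R A) {a : A} (ha : a ∈ S)
    (q : Polynomial R) : Polynomial.aeval a q ∈ S :=
  Polynomial.aeval_algHom_apply S.subtype (⟨a, ha⟩ : S) q ▸ (Polynomial.aeval (⟨a, ha⟩ : S) q).2

theorem Polynomial.eval_map_ofRealHom (p : Polynomial ℝ) (t : ℝ) :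
    (p.map Complex.ofRealHom).eval (t : ℂ) = p.eval t := by
  rw [eval_map]
  exact eval₂_at_apply _ _

section ClosedStarSubalgebra

variable {Y : Type*} [TopologicalSpace Y] {F : StarSubalgebra ℂ (Y →ᵇ ℂ)}

namespace BoundedContinuousFunction

theorem mul_star_apply (g : Y →ᵇ ℂ) (y : Y) : (g * star g) y = ((‖g y‖ ^ 2 : ℝ) : ℂ) := by
  simp [Complex.mul_conj, Complex.normSq_eq_norm_sq]

theorem aeval_apply (u : Y →ᵇ ℂ) (q : Polynomial ℂ) (y : Y) :
    Polynomial.aeval u q y = q.eval (u y) :=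
  (congrArg (· y) (Polynomial.aeval_algHom_apply (toContinuousMapₐ ℂ) u q)).symm.trans
    (Polynomial.aeval_continuousMap_apply q _ y)

end BoundedContinuousFunction

open BoundedContinuousFunction

/-- By Weierstrass, `θ ∘ √` is uniformly approximated on `[0, ‖g‖²]` by real polynomials `p`,
and `y ↦ p (‖g y‖²)` is `p` evaluated at `g * star g ∈ F`. -/
theorem mem_of_apply_eq_comp_norm (hF : IsClosed (F : Set (Y →ᵇ ℂ))) {g h : Y →ᵇ ℂ}
    (hg : g ∈ F) {θ : ℝ → ℝ} (hθ : Continuous θ) (hh : ∀ y, h y = θ ‖g y‖) : h ∈ F := by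
  rw [← SetLike.mem_coe, ← hF.closure_eq, Metric.mem_closure_iff]
  intro ε hε
  obtain ⟨p, hp⟩ := exists_polynomial_near_of_continuousOn 0 (‖g‖ ^ 2) (θ ∘ Real.sqrt)
    (hθ.comp Real.continuous_sqrt).continuousOn (ε / 2) (half_pos hε)
  set q := Polynomial.aeval (g * star g) (p.map Complex.ofRealHom)
  have hclose : ∀ y, dist (h y) (q y) ≤ ε / 2 := by
    intro y
    rw [dist_eq_norm]
    have hy : ‖g y‖ ^ 2 ∈ Set.Icc 0 (‖g‖ ^ 2) :=
      ⟨sq_nonneg _, pow_le_pow_left₀ (norm_nonneg _) (g.norm_coe_le_norm y) 2⟩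
    have := hp _ hy
    rw [Function.comp_apply, Real.sqrt_sq (norm_nonneg _)] at this
    rw [hh, aeval_apply, mul_star_apply, Polynomial.eval_map_ofRealHom, ← Complex.ofReal_sub,
      Complex.norm_real, Real.norm_eq_abs, abs_sub_comm]
    exact this.le
  refine ⟨q, F.aeval_mem (mul_mem hg (star_mem hg)) _, ?_⟩
  calc dist h q ≤ ε / 2 := (dist_le (half_pos hε).le).2 hclose
    _ < ε := half_lt_self hε

theorem exists_mem_cutoff (hF : IsClosed (F : Set (Y →ᵇ ℂ))) {g : Y →ᵇ ℂ} (hg : g ∈ F)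
    {s r : ℝ} (hsr : s < r) :
    ∃ h ∈ F, (∀ y, ‖g y‖ ≤ s → h y = 0) ∧ ∀ y, r ≤ ‖g y‖ → h y = 1 := by
  set θ : ℝ → ℝ := fun t => max 0 (min 1 ((t - s) / (r - s)))
  have hθ : Continuous θ := by fun_prop
  have hθ_norm : ∀ t, ‖((θ t : ℝ) : ℂ)‖ ≤ 1 := fun t => by
    rw [Complex.norm_real, Real.norm_eq_abs, abs_le]
    exact ⟨by linarith [le_max_left 0 (min 1 ((t - s) / (r - s)))],
      max_le zero_le_one (min_le_left _ _)⟩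
  let h : Y →ᵇ ℂ := .ofNormedAddCommGroup (fun y => (θ ‖g y‖ : ℂ)) (by fun_prop) 1
    (fun y => hθ_norm _)
  refine ⟨h, mem_of_apply_eq_comp_norm hF hg hθ fun _ => rfl, fun y hy => ?_, fun y hy => ?_⟩
  · have : (‖g y‖ - s) / (r - s) ≤ 0 := div_nonpos_of_nonpos_of_nonneg (by linarith) (by linarith)
    simp [h, θ, this]
  · have : 1 ≤ (‖g y‖ - s) / (r - s) := by rw [le_div_iff₀ (by linarith)]; linarith
    simp [h, θ, this]

end ClosedStarSubalgebra

theorem IsSetFilter.univ_mem {Y : Type*} {φ : Set (Set Y)} (hφ : IsSetFilter φ) : Set.univ ∈ φ :=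
  let ⟨B, hB⟩ := hφ.1
  hφ.2.2.1 B hB _ (Set.subset_univ B)

theorem IsSetFilter.sUnion_of_isChain {Y : Type*} {c : Set (Set (Set Y))}
    (hc : ∀ χ ∈ c, IsSetFilter χ) (hchain : IsChain (· ⊆ ·) c) (hne : c.Nonempty) :
    IsSetFilter (⋃₀ c) := by
  obtain ⟨χ₀, hχ₀⟩ := hne
  refine ⟨(hc χ₀ hχ₀).1.mono (Set.subset_sUnion_of_mem hχ₀), ?_, ?_, ?_⟩
  · rintro B₁ ⟨χ₁, hχ₁, hB₁⟩ B₂ ⟨χ₂, hχ₂, hB₂⟩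
    obtain ⟨χ, hχ, h₁, h₂⟩ := hchain.directedOn χ₁ hχ₁ χ₂ hχ₂
    exact ⟨χ, hχ, (hc χ hχ).2.1 _ (h₁ hB₁) _ (h₂ hB₂)⟩
  · rintro B ⟨χ, hχ, hB⟩ C hBC
    exact ⟨χ, hχ, (hc χ hχ).2.2.1 B hB C hBC⟩
  · rintro ⟨χ, hχ, hempty⟩
    exact (hc χ hχ).2.2.2 hempty

section FFilter

variable {Y : Type*} [TopologicalSpace Y] {F : StarSubalgebra ℂ (Y →ᵇ ℂ)}
  {φ : Set (Set Y)} {A : Set Y}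

theorem XSet_mono (f : Y →ᵇ ℂ) {r s : ℝ} (hrs : r ≤ s) : XSet f r ⊆ XSet f s :=
  fun _ hy => le_trans hy hrs

theorem XSet_mul_star_add_mul_star_subset (g₁ g₂ : Y →ᵇ ℂ) {r : ℝ} (hr : 0 ≤ r) :
    XSet (g₁ * star g₁ + g₂ * star g₂) (r ^ 2) ⊆ XSet g₁ r ∩ XSet g₂ r := by
  intro y hy
  have hsum : ‖g₁ y‖ ^ 2 + ‖g₂ y‖ ^ 2 ≤ r ^ 2 := by
    simpa only [XSet, Set.mem_ofPred_eq, BoundedContinuousFunction.add_apply,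
      BoundedContinuousFunction.mul_star_apply, ← Complex.ofReal_add, Complex.norm_real,
      Real.norm_eq_abs, abs_of_nonneg (by positivity : 0 ≤ ‖g₁ y‖ ^ 2 + ‖g₂ y‖ ^ 2)] using hy
  constructor
  · exact (pow_le_pow_iff_left₀ (norm_nonneg _) hr two_ne_zero).1 (by linarith [sq_nonneg ‖g₂ y‖])
  · exact (pow_le_pow_iff_left₀ (norm_nonneg _) hr two_ne_zero).1 (by linarith [sq_nonneg ‖g₁ y‖])

theorem mul_star_add_mul_star_mem_ZSet {g₁ g₂ : Y →ᵇ ℂ} (hg₁ : g₁ ∈ ZSet F A)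
    (hg₂ : g₂ ∈ ZSet F A) : g₁ * star g₁ + g₂ * star g₂ ∈ ZSet F A :=
  ⟨add_mem (mul_mem hg₁.1 (star_mem hg₁.1)) (mul_mem hg₂.1 (star_mem hg₂.1)),
    fun y hy => by simp [hg₁.2 y hy, hg₂.2 y hy]⟩

theorem subset_XSet_of_mem_ZSet {f : Y →ᵇ ℂ} (hf : f ∈ ZSet F A) {r : ℝ} (hr : 0 ≤ r) :
    A ⊆ XSet f r := fun y hy => by simpa [XSet, hf.2 y hy] using hr

theorem FFilter.exists_separating_of_mem (hφ : FFilter F φ) {B : Set Y} (hB : B ∈ φ) :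
    ∃ B' ∈ φ, ∃ f ∈ F, (∀ y ∈ B', f y = 0) ∧ ∀ y ∉ B, f y = 1 := by
  by_cases hBuniv : B = Set.univ
  · exact ⟨_, hφ.1.univ_mem, 0, zero_mem F, fun _ _ => rfl,
      fun y hy => (hy (hBuniv ▸ trivial)).elim⟩
  · exact hφ.2.2.2 B hB hBuniv

theorem FFamily.sUnion {c : Set (Set (Set Y))} (hc : ∀ χ ∈ c, FFamily F χ) (hne : c.Nonempty) :
    FFamily F (⋃₀ c) := by
  obtain ⟨χ₀, hχ₀⟩ := hne
  refine ⟨(hc χ₀ hχ₀).1.mono (Set.subset_sUnion_of_mem hχ₀), ?_, ?_⟩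
  · rintro B ⟨χ, hχ, hB⟩
    exact (hc χ hχ).2.1 B hB
  · rintro B ⟨χ, hχ, hB⟩ hBuniv
    obtain ⟨B', hB', f, hf, hf₀, hf₁⟩ := (hc χ hχ).2.2 B hB hBuniv
    exact ⟨B', ⟨χ, hχ, hB'⟩, f, hf, hf₀, hf₁⟩

theorem FFilter.exists_fUltrafilter_superset {ψ : Set (Set Y)} (hψ : FFilter F ψ) :
    ∃ p, FUltrafilter F p ∧ ψ ⊆ p := by
  obtain ⟨p, hψp, hp⟩ := zorn_subset_nonempty {χ | FFilter F χ}
    (fun c hc hchain hne => ⟨⋃₀ c,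
      ⟨.sUnion_of_isChain (fun χ hχ => (hc hχ).1) hchain hne, .sUnion (fun χ hχ => (hc hχ).2) hne⟩,
      fun _ => Set.subset_sUnion_of_mem⟩) ψ hψ
  exact ⟨p, ⟨hp.prop, fun χ hχ hpχ => (hp.eq_of_subset hχ hpχ).symm⟩, hψp⟩

/-- The filter generated by `φ` together with the sets `X(f,r)`, `f ∈ Z(A)`, `r > 0`. -/
def zeroSetExtension (F : StarSubalgebra ℂ (Y →ᵇ ℂ)) (φ : Set (Set Y)) (A : Set Y) :
    Set (Set Y) :=
  {C | ∃ B ∈ φ, ∃ g ∈ ZSet F A, ∃ r : ℝ, 0 < r ∧ B ∩ XSet g r ⊆ C}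

theorem subset_zeroSetExtension : φ ⊆ zeroSetExtension F φ A := fun B hB =>
  ⟨B, hB, 0, ⟨zero_mem F, fun _ _ => rfl⟩, 1, one_pos, Set.inter_subset_left⟩

theorem XSet_mem_zeroSetExtension (huniv : Set.univ ∈ φ) {f : Y →ᵇ ℂ} (hf : f ∈ ZSet F A) {r : ℝ}
    (hr : 0 < r) : XSet f r ∈ zeroSetExtension F φ A :=
  ⟨Set.univ, huniv, f, hf, r, hr, Set.inter_subset_right⟩

theorem nonempty_of_mem_zeroSetExtension (h : ∀ B ∈ φ, (A ∩ B).Nonempty) {C : Set Y}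
    (hC : C ∈ zeroSetExtension F φ A) : C.Nonempty := by
  obtain ⟨B, hB, g, hg, r, hr, hBC⟩ := hC
  obtain ⟨y, hyA, hyB⟩ := h B hB
  exact ⟨y, hBC ⟨hyB, subset_XSet_of_mem_ZSet hg hr.le hyA⟩⟩

theorem isSetFilter_zeroSetExtension (hφ : IsSetFilter φ) (h : ∀ B ∈ φ, (A ∩ B).Nonempty) :
    IsSetFilter (zeroSetExtension F φ A) := by
  refine ⟨⟨_, subset_zeroSetExtension hφ.univ_mem⟩, ?_, ?_,
    fun hempty => (nonempty_of_mem_zeroSetExtension h hempty).ne_empty rfl⟩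
  · rintro C₁ ⟨B₁, hB₁, g₁, hg₁, r₁, hr₁, hC₁⟩ C₂ ⟨B₂, hB₂, g₂, hg₂, r₂, hr₂, hC₂⟩
    set r := min r₁ r₂
    refine ⟨B₁ ∩ B₂, hφ.2.1 _ hB₁ _ hB₂, _, mul_star_add_mul_star_mem_ZSet hg₁ hg₂, r ^ 2,
      by positivity, ?_⟩
    rintro y ⟨⟨hy₁, hy₂⟩, hy⟩
    obtain ⟨hg₁y, hg₂y⟩ := XSet_mul_star_add_mul_star_subset g₁ g₂ (le_min hr₁.le hr₂.le) hy
    exact ⟨hC₁ ⟨hy₁, XSet_mono g₁ (min_le_left _ _) hg₁y⟩,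
      hC₂ ⟨hy₂, XSet_mono g₂ (min_le_right _ _) hg₂y⟩⟩
  · rintro C ⟨B, hB, g, hg, r, hr, hBC⟩ D hCD
    exact ⟨B, hB, g, hg, r, hr, hBC.trans hCD⟩

/-- If `f` vanishes on `B' ∈ φ` and is `1` off `B`, and the cutoff `k` vanishes on `X(g,r/2)` and
is `1` off `X(g,r)`, then `1 - (1 - f)(1 - k)` vanishes on `B' ∩ X(g,r/2)` and is `1` off
`B ∩ X(g,r)`. -/
theorem fFamily_zeroSetExtension (hF : IsClosed (F : Set (Y →ᵇ ℂ))) (hφ : FFilter F φ)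
    (h : ∀ B ∈ φ, (A ∩ B).Nonempty) : FFamily F (zeroSetExtension F φ A) := by
  refine ⟨⟨_, subset_zeroSetExtension hφ.1.univ_mem⟩,
    fun C hC => nonempty_of_mem_zeroSetExtension h hC, ?_⟩
  rintro C ⟨B, hB, g, hg, r, hr, hBC⟩ -
  obtain ⟨k, hkF, hk₀, hk₁⟩ := exists_mem_cutoff hF hg.1 (half_lt_self hr)
  obtain ⟨B', hB', f, hfF, hf₀, hf₁⟩ := hφ.exists_separating_of_mem hB
  refine ⟨B' ∩ XSet g (r / 2), ⟨B', hB', g, hg, r / 2, half_pos hr, subset_rfl⟩,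
    f + k - f * k, sub_mem (add_mem hfF hkF) (mul_mem hfF hkF), ?_, fun y hy => ?_⟩
  · rintro y ⟨hyB', hyg⟩
    simp [hf₀ y hyB', hk₀ y hyg]
  · by_cases hyB : y ∈ B
    · have hgy : r ≤ ‖g y‖ := (not_le.1 fun hle => hy (hBC ⟨hyB, hle⟩)).le
      simp [hk₁ y hgy]
    · simp [hf₁ y hyB]

end FFilter

theorem stmt3 (F : StarSubalgebra ℂ (BoundedContinuousFunction X ℂ)) (hF : IsClosed (F : Set (BoundedContinuousFunction X ℂ)))
    (φ : Set (Set X)) (hφ : FFilter F φ) (A : Set X)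
    (h : ∀ B ∈ φ, (A ∩ B).Nonempty) :
    ∃ p : Set (Set X), FUltrafilter F p ∧ φ ⊆ p ∧
      ∀ f ∈ ZSet F A, ∀ r : ℝ, 0 < r → XSet f r ∈ p := by
  have hψ : FFilter F (zeroSetExtension F φ A) :=
    ⟨isSetFilter_zeroSetExtension hφ.1 h, fFamily_zeroSetExtension hF hφ h⟩
  obtain ⟨p, hp, hψp⟩ := hψ.exists_fUltrafilter_superset
  exact ⟨p, hp, subset_zeroSetExtension.trans hψp,
    fun f hf r hr => hψp (XSet_mem_zeroSetExtension hφ.1.univ_mem hf hr)⟩
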